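/- Two-sided suboptimal bound for a fixed noise parameter (recovering the closed-form bounds of equation (21)): for every σ ∈ ℝ^{n_con} with all σ_j > 0 and every feasible θ ∈ ℝ^r, |qᵀθ − qᵀθ^μ_σ| ≤ β_σ · √(qᵀ S_σ⁻¹ q), where θ^μ_σ = A K̂_σ⁻¹ y, S_σ = I_r + A P_σ Aᵀ, and β_σ = √(Γ_f² + Σ_{j=1}^{n_con} Γ_{w,j}²/σ_j² − yᵀ K̂_σ⁻¹ y). -/

import Mathlib

open Matrix

/-- Aggregated noise-shape matrix `P_σ := ∑ j σ_j⁻² P_j`. -/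
noncomputable def Pagg {N n_con : ℕ} (P : Fin n_con → Matrix (Fin N) (Fin N) ℝ)
    (σ : Fin n_con → ℝ) : Matrix (Fin N) (Fin N) ℝ :=
  ∑ j, ((σ j) ^ 2)⁻¹ • P j

/-- Gram matrix `K̂_σ := AᵀA + P_σ⁻¹`. -/
noncomputable def Khat {r N n_con : ℕ} (A : Matrix (Fin r) (Fin N) ℝ)
    (P : Fin n_con → Matrix (Fin N) (Fin N) ℝ) (σ : Fin n_con → ℝ) :
    Matrix (Fin N) (Fin N) ℝ :=
  Aᵀ * A + (Pagg P σ)⁻¹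

/-- Posterior-mean coefficient vector `θ^μ_σ := A K̂_σ⁻¹ y`. -/
noncomputable def θmean {r N n_con : ℕ} (A : Matrix (Fin r) (Fin N) ℝ) (y : Fin N → ℝ)
    (P : Fin n_con → Matrix (Fin N) (Fin N) ℝ) (σ : Fin n_con → ℝ) : Fin r → ℝ :=
  A *ᵥ ((Khat A P σ)⁻¹ *ᵥ y)

/-- Shape matrix `S_σ := I_r + A P_σ Aᵀ`. -/
noncomputable def Smat {r N n_con : ℕ} (A : Matrix (Fin r) (Fin N) ℝ)
    (P : Fin n_con → Matrix (Fin N) (Fin N) ℝ) (σ : Fin n_con → ℝ) :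
    Matrix (Fin r) (Fin r) ℝ :=
  1 + A * Pagg P σ * Aᵀ

/-- Scaling factor `β_σ := √(Γ_f² + ∑ j Γ_{w,j}²/σ_j² − yᵀ K̂_σ⁻¹ y)`. -/
noncomputable def βfac {r N n_con : ℕ} (A : Matrix (Fin r) (Fin N) ℝ) (y : Fin N → ℝ)
    (Γf : ℝ) (Γw : Fin n_con → ℝ) (P : Fin n_con → Matrix (Fin N) (Fin N) ℝ)
    (σ : Fin n_con → ℝ) : ℝ :=
  Real.sqrt (Γf ^ 2 + ∑ j, (Γw j) ^ 2 / (σ j) ^ 2 - y ⬝ᵥ ((Khat A P σ)⁻¹ *ᵥ y))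

/-- The GP-type dual function `F(σ) := qᵀθ^μ_σ + β_σ √(qᵀ S_σ⁻¹ q)`. -/
noncomputable def dualF {r N n_con : ℕ} (A : Matrix (Fin r) (Fin N) ℝ) (y : Fin N → ℝ)
    (q : Fin r → ℝ) (Γf : ℝ) (Γw : Fin n_con → ℝ)
    (P : Fin n_con → Matrix (Fin N) (Fin N) ℝ) (σ : Fin n_con → ℝ) : ℝ :=
  q ⬝ᵥ θmean A y P σ + βfac A y Γf Γw P σ * Real.sqrt (q ⬝ᵥ ((Smat A P σ)⁻¹ *ᵥ q))

/-!
Write `P := P_σ` and `J(θ) := ‖θ‖² + (y - Aᵀθ)ᵀ P (y - Aᵀθ)`. This quadratic has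
Hessian `S_σ`, minimiser `θ^μ_σ` (push-through identity `S_σ A = A P K̂_σ`) and
minimum `yᵀ K̂_σ⁻¹ y`, so `J(θ) = yᵀ K̂_σ⁻¹ y + (θ - θ^μ_σ)ᵀ S_σ (θ - θ^μ_σ)`.
Feasibility gives `J(θ) ≤ Γ_f² + Σ_j Γ_{w,j}²/σ_j²`, i.e. `(θ - θ^μ_σ)ᵀ S_σ (θ - θ^μ_σ) ≤ β_σ²`,
and Cauchy–Schwarz for the inner product defined by `S_σ` bounds `|qᵀ(θ - θ^μ_σ)|`
by `√(qᵀ S_σ⁻¹ q) · β_σ`.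
-/

namespace Matrix

variable {n : Type*}

theorem PosSemidef.isSymm {S : Matrix n n ℝ} (hS : S.PosSemidef) : S.IsSymm :=
  isHermitian_iff_isSymm.mp hS.isHermitian

variable [Fintype n]

theorem IsSymm.dotProduct_mulVec_comm {R : Type*} [CommSemiring R] {S : Matrix n n R}
    (hS : S.IsSymm) (x z : n → R) : x ⬝ᵥ (S *ᵥ z) = z ⬝ᵥ (S *ᵥ x) := by
  conv_lhs => rw [← hS.eq]
  exact dotProduct_transpose_mulVec S x z

theorem IsSymm.sub_dotProduct_mulVec_sub {R : Type*} [CommRing R] {S : Matrix n n R}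
    (hS : S.IsSymm) (x z : n → R) :
    (x - z) ⬝ᵥ (S *ᵥ (x - z)) = x ⬝ᵥ (S *ᵥ x) - 2 * (x ⬝ᵥ (S *ᵥ z)) + z ⬝ᵥ (S *ᵥ z) := by
  simp only [mulVec_sub, sub_dotProduct, dotProduct_sub, hS.dotProduct_mulVec_comm z x]
  ring

theorem PosSemidef.dotProduct_mulVec_sq_le {S : Matrix n n ℝ} (hS : S.PosSemidef) (u v : n → ℝ) :
    (u ⬝ᵥ (S *ᵥ v)) ^ 2 ≤ (u ⬝ᵥ (S *ᵥ u)) * (v ⬝ᵥ (S *ᵥ v)) := by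
  have hquad : ∀ t : ℝ,
      0 ≤ (v ⬝ᵥ (S *ᵥ v)) * (t * t) + 2 * (u ⬝ᵥ (S *ᵥ v)) * t + u ⬝ᵥ (S *ᵥ u) := fun t => by
    have h := hS.dotProduct_mulVec_nonneg (u + t • v)
    simp only [star_trivial, mulVec_add, mulVec_smul, add_dotProduct, dotProduct_add,
      smul_dotProduct, dotProduct_smul, smul_eq_mul, hS.isSymm.dotProduct_mulVec_comm v u] at h
    linarith
  have := discrim_le_zero hquad
  rw [discrim] at this
  linarith

theorem PosDef.abs_dotProduct_le [DecidableEq n] {S : Matrix n n ℝ} (hS : S.PosDef) (q v : n → ℝ) :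
    |q ⬝ᵥ v| ≤ √(q ⬝ᵥ (S⁻¹ *ᵥ q)) * √(v ⬝ᵥ (S *ᵥ v)) := by
  have hSS : S *ᵥ (S⁻¹ *ᵥ q) = q := by
    rw [mulVec_mulVec, mul_nonsing_inv _ hS.det_pos.ne'.isUnit, one_mulVec]
  have h := hS.posSemidef.dotProduct_mulVec_sq_le (S⁻¹ *ᵥ q) v
  rw [hS.posSemidef.isSymm.dotProduct_mulVec_comm _ v, hSS, dotProduct_comm v,
    dotProduct_comm _ q] at h
  have hq : 0 ≤ q ⬝ᵥ (S⁻¹ *ᵥ q) := by simpa using hS.inv.posSemidef.dotProduct_mulVec_nonneg q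
  rw [← Real.sqrt_mul hq, ← Real.sqrt_sq_eq_abs]
  exact Real.sqrt_le_sqrt h

theorem posDef_sum_smul {ι : Type*} [Fintype ι] {P : ι → Matrix n n ℝ} {c : ι → ℝ}
    (hP : ∀ j, (P j).PosSemidef) (hPsum : (∑ j, P j).PosDef) (hc : ∀ j, 0 < c j) :
    (∑ j, c j • P j).PosDef := by
  refine .of_dotProduct_mulVec_pos
    (posSemidef_sum Finset.univ fun j _ => (hP j).smul (hc j).le).isHermitian fun x hx => ?_
  have hpos := hPsum.dotProduct_mulVec_pos hx
  simp only [star_trivial, sum_mulVec, smul_mulVec, dotProduct_sum, dotProduct_smul,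
    smul_eq_mul] at hpos ⊢
  obtain ⟨j, -, hj⟩ := Finset.exists_lt_of_sum_lt (s := Finset.univ) (f := 0)
    (g := fun i => x ⬝ᵥ (P i *ᵥ x)) (by simpa using hpos)
  calc 0 < c j * (x ⬝ᵥ (P j *ᵥ x)) := mul_pos (hc j) hj
    _ ≤ ∑ i, c i * (x ⬝ᵥ (P i *ᵥ x)) := Finset.single_le_sum
        (fun i _ => mul_nonneg (hc i).le (by simpa using (hP i).dotProduct_mulVec_nonneg x))
        (Finset.mem_univ j)

end Matrix

section Posterior

variable {r N n_con : ℕ} (A : Matrix (Fin r) (Fin N) ℝ) (P : Fin n_con → Matrix (Fin N) (Fin N) ℝ)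
  (σ : Fin n_con → ℝ)

theorem dotProduct_Pagg_mulVec (x : Fin N → ℝ) :
    x ⬝ᵥ (Pagg P σ *ᵥ x) = ∑ j, x ⬝ᵥ (P j *ᵥ x) / σ j ^ 2 := by
  simp only [Pagg, sum_mulVec, smul_mulVec, dotProduct_sum, dotProduct_smul, smul_eq_mul,
    inv_mul_eq_div]

theorem Khat_mul_Pagg (hM : IsUnit (Pagg P σ).det) :
    Khat A P σ * Pagg P σ = Aᵀ * A * Pagg P σ + 1 := by
  rw [Khat, Matrix.add_mul, nonsing_inv_mul _ hM]

theorem Smat_mul (hM : IsUnit (Pagg P σ).det) :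
    Smat A P σ * A = A * Pagg P σ * Khat A P σ := by
  simp only [Smat, Khat, Matrix.mul_add, Matrix.add_mul, Matrix.mul_assoc, mul_nonsing_inv _ hM,
    Matrix.one_mul, Matrix.mul_one]
  exact add_comm _ _

theorem Khat_posDef (hM : (Pagg P σ).PosDef) : (Khat A P σ).PosDef := by
  simpa [Khat] using PosDef.posSemidef_add (posSemidef_conjTranspose_mul_self A) hM.inv

theorem Smat_posDef (hM : (Pagg P σ).PosSemidef) : (Smat A P σ).PosDef := by
  simpa [Smat] using PosDef.one.add_posSemidef (hM.mul_mul_conjTranspose_same A)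

variable (y : Fin N → ℝ)

theorem Smat_mulVec_θmean (hM : (Pagg P σ).PosDef) :
    Smat A P σ *ᵥ θmean A y P σ = A *ᵥ (Pagg P σ *ᵥ y) := by
  rw [θmean, mulVec_mulVec, mulVec_mulVec, Smat_mul A P σ hM.det_pos.ne'.isUnit,
    Matrix.mul_assoc, mul_nonsing_inv _ (Khat_posDef A P σ hM).det_pos.ne'.isUnit, Matrix.mul_one,
    mulVec_mulVec]

theorem θmean_dotProduct_mulVec (hM : (Pagg P σ).PosDef) :
    θmean A y P σ ⬝ᵥ (A *ᵥ (Pagg P σ *ᵥ y))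
      = y ⬝ᵥ (Pagg P σ *ᵥ y) - y ⬝ᵥ ((Khat A P σ)⁻¹ *ᵥ y) := by
  have hK := Khat_posDef A P σ hM
  set w := (Khat A P σ)⁻¹ *ᵥ y
  have hw : Khat A P σ *ᵥ w = y := by
    rw [mulVec_mulVec, mul_nonsing_inv _ hK.det_pos.ne'.isUnit, one_mulVec]
  calc θmean A y P σ ⬝ᵥ (A *ᵥ (Pagg P σ *ᵥ y))
      = w ⬝ᵥ ((Aᵀ * A * Pagg P σ) *ᵥ y) := by
        rw [θmean, dotProduct_comm, ← dotProduct_transpose_mulVec, mulVec_mulVec, mulVec_mulVec]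
    _ = w ⬝ᵥ ((Khat A P σ * Pagg P σ) *ᵥ y) - w ⬝ᵥ y := by
        rw [Khat_mul_Pagg A P σ hM.det_pos.ne'.isUnit, add_mulVec, one_mulVec, dotProduct_add]
        ring
    _ = y ⬝ᵥ (Pagg P σ *ᵥ y) - y ⬝ᵥ w := by
        rw [← mulVec_mulVec, hK.posSemidef.isSymm.dotProduct_mulVec_comm,
          hw, dotProduct_comm w, dotProduct_comm (Pagg P σ *ᵥ y)]

theorem dotProduct_Smat_mulVec_sub_θmean (hM : (Pagg P σ).PosDef) (θ : Fin r → ℝ) :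
    (θ - θmean A y P σ) ⬝ᵥ (Smat A P σ *ᵥ (θ - θmean A y P σ))
      = θ ⬝ᵥ θ + (y - Aᵀ *ᵥ θ) ⬝ᵥ (Pagg P σ *ᵥ (y - Aᵀ *ᵥ θ))
        - y ⬝ᵥ ((Khat A P σ)⁻¹ *ᵥ y) := by
  have hMsymm := hM.posSemidef.isSymm
  have hSsymm := (Smat_posDef A P σ hM.posSemidef).posSemidef.isSymm
  have hadj : ∀ z, θ ⬝ᵥ (A *ᵥ z) = (Aᵀ *ᵥ θ) ⬝ᵥ z := fun z => by
    rw [dotProduct_mulVec, mulVec_transpose]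
  have hθS : θ ⬝ᵥ (Smat A P σ *ᵥ θ) = θ ⬝ᵥ θ + (Aᵀ *ᵥ θ) ⬝ᵥ (Pagg P σ *ᵥ (Aᵀ *ᵥ θ)) := by
    rw [Smat, add_mulVec, one_mulVec, dotProduct_add, ← mulVec_mulVec, ← mulVec_mulVec, hadj]
  rw [hSsymm.sub_dotProduct_mulVec_sub, hMsymm.sub_dotProduct_mulVec_sub,
    Smat_mulVec_θmean A P σ y hM, θmean_dotProduct_mulVec A P σ y hM, hθS, hadj,
    hMsymm.dotProduct_mulVec_comm y (Aᵀ *ᵥ θ)]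
  ring

end Posterior

theorem two_sided_bound_fixed_sigma_general
    (r N n_con : ℕ)
    (A : Matrix (Fin r) (Fin N) ℝ) (y : Fin N → ℝ) (q : Fin r → ℝ)
    (Γf : ℝ)
    (Γw : Fin n_con → ℝ)
    (P : Fin n_con → Matrix (Fin N) (Fin N) ℝ)
    (hP : ∀ j, (P j).PosSemidef)
    (hPsum : (∑ j, P j).PosDef)
    (σ : Fin n_con → ℝ) (hσ : ∀ j, 0 < σ j)
    (θ : Fin r → ℝ)
    (hθf : θ ⬝ᵥ θ ≤ Γf ^ 2)
    (hθw : ∀ j, (y - Aᵀ *ᵥ θ) ⬝ᵥ (P j *ᵥ (y - Aᵀ *ᵥ θ)) ≤ (Γw j) ^ 2) :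
    |q ⬝ᵥ θ - q ⬝ᵥ θmean A y P σ|
      ≤ βfac A y Γf Γw P σ * Real.sqrt (q ⬝ᵥ ((Smat A P σ)⁻¹ *ᵥ q)) := by
  have hM : (Pagg P σ).PosDef := posDef_sum_smul hP hPsum fun j => inv_pos.mpr (pow_pos (hσ j) 2)
  have hres : (y - Aᵀ *ᵥ θ) ⬝ᵥ (Pagg P σ *ᵥ (y - Aᵀ *ᵥ θ)) ≤ ∑ j, Γw j ^ 2 / σ j ^ 2 := by
    rw [dotProduct_Pagg_mulVec]
    exact Finset.sum_le_sum fun j _ => div_le_div_of_nonneg_right (hθw j) (sq_nonneg _)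
  calc |q ⬝ᵥ θ - q ⬝ᵥ θmean A y P σ| = |q ⬝ᵥ (θ - θmean A y P σ)| := by rw [dotProduct_sub]
    _ ≤ √(q ⬝ᵥ ((Smat A P σ)⁻¹ *ᵥ q)) *
          √((θ - θmean A y P σ) ⬝ᵥ (Smat A P σ *ᵥ (θ - θmean A y P σ))) :=
        (Smat_posDef A P σ hM.posSemidef).abs_dotProduct_le _ _
    _ ≤ √(q ⬝ᵥ ((Smat A P σ)⁻¹ *ᵥ q)) * βfac A y Γf Γw P σ := by
        rw [βfac, dotProduct_Smat_mulVec_sub_θmean A P σ y hM]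
        gcongr
    _ = βfac A y Γf Γw P σ * √(q ⬝ᵥ ((Smat A P σ)⁻¹ *ᵥ q)) := mul_comm _ _

/-- Two-sided suboptimal bound for a fixed noise parameter (equation (21)): for every
positive `σ` and every feasible `θ`, `|qᵀθ − qᵀθ^μ_σ| ≤ β_σ √(qᵀ S_σ⁻¹ q)`. -/
theorem two_sided_bound_fixed_sigma
    (r N n_con : ℕ) (hn : 1 ≤ n_con)
    (A : Matrix (Fin r) (Fin N) ℝ) (y : Fin N → ℝ) (q : Fin r → ℝ)
    (Γf : ℝ) (hΓf : 0 < Γf)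
    (Γw : Fin n_con → ℝ) (hΓw : ∀ j, 0 < Γw j)
    (P : Fin n_con → Matrix (Fin N) (Fin N) ℝ)
    (hP : ∀ j, (P j).PosSemidef)
    (hPsum : (∑ j, P j).PosDef)
    (σ : Fin n_con → ℝ) (hσ : ∀ j, 0 < σ j)
    (θ : Fin r → ℝ)
    (hθf : θ ⬝ᵥ θ ≤ Γf ^ 2)
    (hθw : ∀ j, (y - Aᵀ *ᵥ θ) ⬝ᵥ (P j *ᵥ (y - Aᵀ *ᵥ θ)) ≤ (Γw j) ^ 2) :
    |q ⬝ᵥ θ - q ⬝ᵥ θmean A y P σ|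
      ≤ βfac A y Γf Γw P σ * Real.sqrt (q ⬝ᵥ ((Smat A P σ)⁻¹ *ᵥ q)) :=
  two_sided_bound_fixed_sigma_general r N n_con A y q Γf Γw P hP hPsum σ hσ θ hθf hθw
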